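/- arXiv:math/0406039 — 7 statements merged into one kernel-verified Lean document; each statement's English description precedes it below -/
import Mathlib

section
/- Let I ⊆ ℝ be an open interval, v : I → ℝ twice differentiable with v > 0 on I, k a positive integer, and r_1,…,r_k, a_1,…,a_k real numbers. Set ζ := Σ_{i=1}^k r_i·a_i and η := Σ_{i=1}^k r_i·a_i², and assume ζ ≠ 0 and η ≠ 0. With α := ζ/η and β := ζ²/η, for every x ∈ I, Σ_{i=1}^k r_i·(v^{a_i})''(x)/v^{a_i}(x) = β·(v^{1/α})''(x)/v^{1/α}(x). -/
/-!
For `v > 0`, `(v^c)''/v^c = c·(v''/v) + c(c-1)·(v'/v)²` is a polynomial of degree two in `c`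
without constant term. Summing it against the weights `rᵢ` at `c = aᵢ` therefore only sees the
moments `ζ = Σ rᵢaᵢ` and `η = Σ rᵢaᵢ²`, and the single exponent `c = 1/α = η/ζ` with weight
`β = ζ²/η` has the same two moments.
-/

open Filter Topology

section RpowConst

variable {v : ℝ → ℝ} {x : ℝ}

theorem deriv_rpow_const_eventuallyEq (hv : ∀ᶠ y in 𝓝 x, DifferentiableAt ℝ v y)
    (hpos : ∀ᶠ y in 𝓝 x, 0 < v y) (c : ℝ) :
    deriv (fun y => v y ^ c) =ᶠ[𝓝 x] fun y => c * v y ^ (c - 1) * deriv v y := by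
  filter_upwards [hv, hpos] with y hvy hposy
  rw [(hvy.hasDerivAt.rpow_const (p := c) (Or.inl hposy.ne')).deriv]
  ring

theorem deriv_deriv_rpow_const (hv : ∀ᶠ y in 𝓝 x, DifferentiableAt ℝ v y)
    (hv' : DifferentiableAt ℝ (deriv v) x) (hpos : ∀ᶠ y in 𝓝 x, 0 < v y) (c : ℝ) :
    deriv (deriv fun y => v y ^ c) x =
      c * (c - 1) * v x ^ (c - 1 - 1) * deriv v x ^ 2 + c * v x ^ (c - 1) * deriv (deriv v) x := by
  rw [(deriv_rpow_const_eventuallyEq hv hpos c).deriv_eq]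
  have hpow : HasDerivAt (fun y => c * v y ^ (c - 1))
      (c * (deriv v x * (c - 1) * v x ^ (c - 1 - 1))) x :=
    (hv.self_of_nhds.hasDerivAt.rpow_const (Or.inl hpos.self_of_nhds.ne')).const_mul c
  exact (hpow.mul hv'.hasDerivAt).deriv.trans (by ring)

theorem deriv_deriv_rpow_const_div (hv : ∀ᶠ y in 𝓝 x, DifferentiableAt ℝ v y)
    (hv' : DifferentiableAt ℝ (deriv v) x) (hpos : ∀ᶠ y in 𝓝 x, 0 < v y) (c : ℝ) :
    deriv (deriv fun y => v y ^ c) x / v x ^ c =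
      c * (deriv (deriv v) x / v x) + c * (c - 1) * (deriv v x / v x) ^ 2 := by
  have hvx : 0 < v x := hpos.self_of_nhds
  have hvc : v x ^ c ≠ 0 := (Real.rpow_pos_of_pos hvx c).ne'
  rw [deriv_deriv_rpow_const hv hv' hpos c, Real.rpow_sub hvx, Real.rpow_sub hvx,
    Real.rpow_one]
  field_simp
  ring

end RpowConst

theorem Finset.sum_mul_quadratic_eq {ι : Type*} (s : Finset ι) (r a : ι → ℝ) (A B : ℝ) :
    ∑ i ∈ s, r i * (a i * A + a i * (a i - 1) * B) =
      (∑ i ∈ s, r i * a i) * (A - B) + (∑ i ∈ s, r i * a i ^ 2) * B := by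
  rw [Finset.sum_mul, Finset.sum_mul, ← Finset.sum_add_distrib]
  exact Finset.sum_congr rfl fun i _ => by ring

theorem stmt_2_general (I : Set ℝ) (hIopen : IsOpen I)
    (v : ℝ → ℝ)
    (hv : ∀ x ∈ I, DifferentiableAt ℝ v x)
    (hv' : ∀ x ∈ I, DifferentiableAt ℝ (deriv v) x)
    (hvpos : ∀ x ∈ I, 0 < v x)
    (k : ℕ) (r a : Fin k → ℝ)
    (ζ η : ℝ) (hζdef : ζ = ∑ i, r i * a i) (hηdef : η = ∑ i, r i * a i ^ 2)
    (hζ : ζ ≠ 0) (hη : η ≠ 0)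
    (α β : ℝ) (hα : α = ζ / η) (hβ : β = ζ ^ 2 / η) :
    ∀ x ∈ I,
      ∑ i, r i * (deriv (deriv (fun y => v y ^ a i)) x / v x ^ a i) =
        β * (deriv (deriv (fun y => v y ^ (1 / α))) x / v x ^ (1 / α)) := by
  intro x hx
  have hI : I ∈ 𝓝 x := hIopen.mem_nhds hx
  have ratio := deriv_deriv_rpow_const_div (eventually_of_mem hI hv) (hv' x hx)
    (eventually_of_mem hI hvpos)
  simp only [ratio, Finset.sum_mul_quadratic_eq, ← hζdef, ← hηdef, hα, hβ, one_div_div]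
  field_simp
  ring

/-- Lemma 2.8 (ii) of the paper, one-dimensional case: with `ζ = Σ rᵢ aᵢ ≠ 0`,
`η = Σ rᵢ aᵢ² ≠ 0`, `α = ζ/η` and `β = ζ²/η`, for `v > 0` twice differentiable
on the open interval `I`, `Σ rᵢ (v^{aᵢ})''/v^{aᵢ} = β (v^{1/α})''/v^{1/α}` on `I`. -/
theorem stmt_2 (I : Set ℝ) (hIopen : IsOpen I) (hIconn : I.OrdConnected)
    (v : ℝ → ℝ)
    (hv : ∀ x ∈ I, DifferentiableAt ℝ v x)
    (hv' : ∀ x ∈ I, DifferentiableAt ℝ (deriv v) x)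
    (hvpos : ∀ x ∈ I, 0 < v x)
    (k : ℕ) (hk : 0 < k) (r a : Fin k → ℝ)
    (ζ η : ℝ) (hζdef : ζ = ∑ i, r i * a i) (hηdef : η = ∑ i, r i * a i ^ 2)
    (hζ : ζ ≠ 0) (hη : η ≠ 0)
    (α β : ℝ) (hα : α = ζ / η) (hβ : β = ζ ^ 2 / η) :
    ∀ x ∈ I,
      ∑ i, r i * (deriv (deriv (fun y => v y ^ a i)) x / v x ^ a i) =
        β * (deriv (deriv (fun y => v y ^ (1 / α))) x / v x ^ (1 / α)) :=
  stmt_2_general I hIopen v hv hv' hvpos k r a ζ η hζdef hηdef hζ hη α β hα hβ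
end

section
/- Let I ⊆ ℝ be an open interval and φ : I → ℝ twice differentiable with φ > 0 on I. Let s_1,…,s_m be positive integers and p_1,…,p_m real numbers, and set ζ := Σ_{l=1}^m s_l·p_l and η := Σ_{l=1}^m s_l·p_l². Then on I: 2·Σ_{i=1}^m s_i·(φ^{p_i})''/φ^{p_i} + Σ_{i=1}^m s_i·(s_i − 1)·((φ^{p_i})')²/(φ^{p_i})² + Σ_{i=1}^m Σ_{k≠i} s_k·s_i·((φ^{p_i})'/φ^{p_i})·((φ^{p_k})'/φ^{p_k}) = 2·ζ·φ''/φ + [(ζ − 2)·ζ + η]·(φ'/φ)². -/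
/-- The computational core of Proposition 4.9: substituting the generalized
Kasner warping functions `bᵢ = φ^{pᵢ}` into the scalar curvature expression of
Corollary 2.7 (scalar-flat fibers) yields `2ζ φ''/φ + [(ζ-2)ζ + η](φ'/φ)²`,
where `ζ = Σ sₗ pₗ` and `η = Σ sₗ pₗ²`. -/
theorem stmt_10 (I : Set ℝ) (hIopen : IsOpen I) (hIconn : I.OrdConnected)
    (φ : ℝ → ℝ)
    (hφ : ∀ x ∈ I, DifferentiableAt ℝ φ x)
    (hφ' : ∀ x ∈ I, DifferentiableAt ℝ (deriv φ) x)
    (hφpos : ∀ x ∈ I, 0 < φ x)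
    (m : ℕ) (hm : 0 < m) (s : Fin m → ℕ) (hs : ∀ l, 0 < s l) (p : Fin m → ℝ)
    (ζ η : ℝ) (hζdef : ζ = ∑ l, (s l : ℝ) * p l)
    (hηdef : η = ∑ l, (s l : ℝ) * p l ^ 2) :
    ∀ x ∈ I,
      2 * ∑ i, (s i : ℝ) * (deriv (deriv (fun y => φ y ^ p i)) x / φ x ^ p i) +
        ∑ i, (s i : ℝ) * ((s i : ℝ) - 1) *
          (deriv (fun y => φ y ^ p i) x) ^ 2 / (φ x ^ p i) ^ 2 +
        ∑ i, ∑ k ∈ Finset.univ.erase i,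
          (s k : ℝ) * (s i : ℝ) * (deriv (fun y => φ y ^ p i) x / φ x ^ p i) *
            (deriv (fun y => φ y ^ p k) x / φ x ^ p k) =
      2 * ζ * (deriv (deriv φ) x / φ x) +
        ((ζ - 2) * ζ + η) * (deriv φ x / φ x) ^ 2 := by
  intro x hx
  have hφx : (0:ℝ) < φ x := hφpos x hx
  have hφne : φ x ≠ 0 := hφx.ne'
  set D1 : ℝ := deriv φ x / φ x with hD1
  set D2 : ℝ := deriv (deriv φ) x / φ x with hD2
  have hQ1 : ∀ c : ℝ, deriv (fun y => φ y ^ c) x / φ x ^ c = c * D1 := by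
    intro c
    have hd : HasDerivAt (fun y => φ y ^ c) (deriv φ x * c * φ x ^ (c - 1)) x :=
      (hφ x hx).hasDerivAt.rpow_const (Or.inl hφne)
    have hpne : φ x ^ c ≠ 0 := (Real.rpow_pos_of_pos hφx c).ne'
    rw [hd.deriv, Real.rpow_sub_one hφne, hD1]
    field_simp
  have hQ2 : ∀ c : ℝ, deriv (deriv (fun y => φ y ^ c)) x / φ x ^ c
      = c * D2 + c * (c - 1) * D1 ^ 2 := by
    intro c
    have hev : deriv (fun z => φ z ^ c) =ᶠ[nhds x]
        fun y => deriv φ y * c * φ y ^ (c - 1) := by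
      filter_upwards [hIopen.mem_nhds hx] with y hy
      exact (((hφ y hy).hasDerivAt).rpow_const (Or.inl (hφpos y hy).ne')).deriv
    rw [hev.deriv_eq]
    have h1 : HasDerivAt (fun y => deriv φ y * c) (deriv (deriv φ) x * c) x :=
      ((hφ' x hx).hasDerivAt).mul_const c
    have h2 : HasDerivAt (fun y => φ y ^ (c - 1))
        (deriv φ x * (c - 1) * φ x ^ (c - 1 - 1)) x :=
      ((hφ x hx).hasDerivAt).rpow_const (Or.inl hφne)
    have hmul := h1.mul h2
    have hder : deriv (fun y => deriv φ y * c * φ y ^ (c - 1)) x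
        = deriv (deriv φ) x * c * φ x ^ (c - 1)
          + deriv φ x * c * (deriv φ x * (c - 1) * φ x ^ (c - 1 - 1)) := hmul.deriv
    have e1 : φ x ^ (c - 1) = φ x ^ c / φ x := Real.rpow_sub_one hφne c
    have e2 : φ x ^ (c - 1 - 1) = φ x ^ c / φ x / φ x := by
      rw [Real.rpow_sub_one hφne, e1]
    have hpne : φ x ^ c ≠ 0 := (Real.rpow_pos_of_pos hφx c).ne'
    rw [hder, e1, e2, hD1, hD2]
    field_simp
  simp only [mul_div_assoc, ← div_pow, hQ1, hQ2]
  set S1 : ℝ := ∑ i, (s i : ℝ) * p i with hS1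
  set S2 : ℝ := ∑ i, (s i : ℝ) * p i ^ 2 with hS2
  set S3 : ℝ := ∑ i, ((s i : ℝ) * p i) ^ 2 with hS3
  have hA : ∑ i, (s i : ℝ) * (p i * D2 + p i * (p i - 1) * D1 ^ 2)
      = S1 * D2 + (S2 - S1) * D1 ^ 2 := by
    rw [hS1, hS2]
    rw [Finset.sum_congr rfl (fun i _ => by
      show (s i : ℝ) * (p i * D2 + p i * (p i - 1) * D1 ^ 2)
        = (s i : ℝ) * p i * D2 + ((s i : ℝ) * p i ^ 2 - (s i : ℝ) * p i) * D1 ^ 2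
      ring)]
    rw [Finset.sum_add_distrib, ← Finset.sum_mul, ← Finset.sum_mul,
      Finset.sum_sub_distrib]
  have hB : ∑ i, (s i : ℝ) * ((s i : ℝ) - 1) * (p i * D1) ^ 2
      = (S3 - S2) * D1 ^ 2 := by
    rw [hS2, hS3]
    rw [Finset.sum_congr rfl (fun i _ => by
      show (s i : ℝ) * ((s i : ℝ) - 1) * (p i * D1) ^ 2
        = (((s i : ℝ) * p i) ^ 2 - (s i : ℝ) * p i ^ 2) * D1 ^ 2
      ring)]
    rw [← Finset.sum_mul, Finset.sum_sub_distrib]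
  have hC : ∑ i, ∑ k ∈ Finset.univ.erase i,
        (s k : ℝ) * (s i : ℝ) * (p i * D1) * (p k * D1)
      = (S1 ^ 2 - S3) * D1 ^ 2 := by
    have h1 : ∀ i : Fin m, ∑ k ∈ Finset.univ.erase i,
          (s k : ℝ) * (s i : ℝ) * (p i * D1) * (p k * D1)
        = ((s i : ℝ) * p i) * (S1 * D1 ^ 2) - ((s i : ℝ) * p i) ^ 2 * D1 ^ 2 := by
      intro i
      rw [Finset.sum_erase_eq_sub (Finset.mem_univ i), hS1, Finset.sum_mul,
        Finset.mul_sum]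
      congr 1
      · exact Finset.sum_congr rfl fun k _ => by ring
      · ring
    rw [Finset.sum_congr rfl fun i _ => h1 i, Finset.sum_sub_distrib,
      ← Finset.sum_mul, ← Finset.sum_mul, ← hS1, ← hS3]
    ring
  rw [hA, hB, hC, hζdef, hηdef]
  ring
end

section
/- Let I ⊆ ℝ be an open interval and φ : I → ℝ twice differentiable with φ > 0 on I. Let s_1,…,s_m be positive integers, p_1,…,p_m real numbers, ζ := Σ_{l=1}^m s_l·p_l ≠ 0, η := Σ_{l=1}^m s_l·p_l², and let τ, τ_1,…,τ_m ∈ ℝ. Set u := φ^{(ζ² + η)/(2ζ)}. Then the equation 2ζ·φ''/φ + [(ζ − 2)·ζ + η]·(φ'/φ)² + Σ_{i=1}^m τ_i/φ^{2p_i} = τ holds on I if and only if −(4ζ²/(ζ² + η))·u'' = −τ·u + Σ_{i=1}^m τ_i·u^{1 − 4ζ·p_i/(ζ² + η)} holds on I. -/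
/-- Corollary 4.11 of the paper: with `ζ = Σ sₗ pₗ ≠ 0`, `η = Σ sₗ pₗ²` and
`u = φ^{(ζ²+η)/(2ζ)}`, the constant scalar curvature equation
`2ζ φ''/φ + [(ζ-2)ζ + η](φ'/φ)² + Σ τᵢ/φ^{2pᵢ} = τ` holds on `I` iff
`-(4ζ²/(ζ²+η)) u'' = -τ u + Σ τᵢ u^{1 - 4ζpᵢ/(ζ²+η)}` holds on `I`. -/
theorem stmt_11 (I : Set ℝ) (hIopen : IsOpen I) (hIconn : I.OrdConnected)
    (φ : ℝ → ℝ)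
    (hφ : ∀ x ∈ I, DifferentiableAt ℝ φ x)
    (hφ' : ∀ x ∈ I, DifferentiableAt ℝ (deriv φ) x)
    (hφpos : ∀ x ∈ I, 0 < φ x)
    (m : ℕ) (hm : 0 < m) (s : Fin m → ℕ) (hs : ∀ l, 0 < s l) (p : Fin m → ℝ)
    (ζ η : ℝ) (hζdef : ζ = ∑ l, (s l : ℝ) * p l)
    (hηdef : η = ∑ l, (s l : ℝ) * p l ^ 2) (hζ : ζ ≠ 0)
    (τ : ℝ) (τF : Fin m → ℝ)
    (u : ℝ → ℝ) (hu : u = fun x => φ x ^ ((ζ ^ 2 + η) / (2 * ζ))) :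
    (∀ x ∈ I,
        2 * ζ * (deriv (deriv φ) x / φ x) +
          ((ζ - 2) * ζ + η) * (deriv φ x / φ x) ^ 2 +
          ∑ i, τF i / φ x ^ (2 * p i) = τ) ↔
    (∀ x ∈ I,
        -(4 * ζ ^ 2 / (ζ ^ 2 + η)) * deriv (deriv u) x =
          -τ * u x + ∑ i, τF i * u x ^ (1 - 4 * ζ * p i / (ζ ^ 2 + η))) := by
  have hη0 : 0 ≤ η := by rw [hηdef]; positivity
  have hη : 0 < η := by
    rcases hη0.lt_or_eq with h | h
    · exact h
    exfalso; apply hζ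
    have hz : ∀ l ∈ Finset.univ, (s l : ℝ) * p l ^ 2 = 0 :=
      (Finset.sum_eq_zero_iff_of_nonneg (fun l _ => by positivity)).1 (hηdef ▸ h.symm)
    rw [hζdef]
    refine Finset.sum_eq_zero fun l _ => ?_
    have hsl : (s l : ℝ) ≠ 0 := Nat.cast_ne_zero.2 (hs l).ne'
    have hp : p l = 0 := by
      rcases mul_eq_zero.1 (hz l (Finset.mem_univ l)) with h' | h'
      · exact absurd h' hsl
      · exact (pow_eq_zero_iff two_ne_zero).1 h'
    simp [hp]
  have hζη : (0:ℝ) < ζ ^ 2 + η := by positivity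
  set a : ℝ := (ζ ^ 2 + η) / (2 * ζ) with ha
  have h2ζ : (2:ℝ) * ζ ≠ 0 := by simpa using hζ
  have ha0 : a ≠ 0 := div_ne_zero hζη.ne' h2ζ
  have hder1' : ∀ y ∈ I, deriv u y = deriv φ y * a * φ y ^ (a - 1) := by
    intro y hy
    rw [hu]
    exact ((hφ y hy).hasDerivAt.rpow_const (Or.inl (hφpos y hy).ne')).deriv
  refine forall₂_congr fun x hx => ?_
  have hpos := hφpos x hx
  have hφne : φ x ≠ 0 := hpos.ne'
  have hd2 : deriv (deriv u) x =
      deriv (deriv φ) x * a * φ x ^ (a - 1) +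
        deriv φ x * a * (deriv φ x * (a - 1) * φ x ^ (a - 1 - 1)) := by
    have heq : deriv u =ᶠ[nhds x] fun y => deriv φ y * a * φ y ^ (a - 1) :=
      Filter.eventuallyEq_of_mem (hIopen.mem_nhds hx) hder1'
    rw [heq.deriv_eq]
    exact (((hφ' x hx).hasDerivAt.mul_const a).mul
      ((hφ x hx).hasDerivAt.rpow_const (Or.inl hφne))).deriv
  set A := φ x ^ a with hA
  have hApos : 0 < A := Real.rpow_pos_of_pos hpos a
  have hAeq1 : φ x ^ (a - 1) = A / φ x := by rw [hA, Real.rpow_sub hpos, Real.rpow_one]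
  have hAeq2 : φ x ^ (a - 1 - 1) = A / φ x / φ x := by
    rw [Real.rpow_sub hpos, Real.rpow_sub hpos, Real.rpow_one, hA]
  have hux : u x = A := by rw [hu]
  have hsum : ∑ i, τF i * u x ^ (1 - 4 * ζ * p i / (ζ ^ 2 + η)) =
      A * ∑ i, τF i / φ x ^ (2 * p i) := by
    rw [Finset.mul_sum]
    refine Finset.sum_congr rfl fun i _ => ?_
    have hexp : u x ^ (1 - 4 * ζ * p i / (ζ ^ 2 + η)) = A / φ x ^ (2 * p i) := by
      rw [hux, hA, ← Real.rpow_mul hpos.le,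
        show a * (1 - 4 * ζ * p i / (ζ ^ 2 + η)) = a - 2 * p i by
          rw [ha]; field_simp; ring,
        Real.rpow_sub hpos]
    rw [hexp]; ring
  rw [hd2, hAeq1, hAeq2, hsum, hux]
  set d1 := deriv φ x
  set d2 := deriv (deriv φ) x
  set S := ∑ i, τF i / φ x ^ (2 * p i) with hS
  have hL : -(4 * ζ ^ 2 / (ζ ^ 2 + η)) *
      (d2 * a * (A / φ x) + d1 * a * (d1 * (a - 1) * (A / φ x / φ x))) =
      A * (-(2 * ζ * (d2 / φ x) + ((ζ - 2) * ζ + η) * (d1 / φ x) ^ 2)) := by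
    rw [ha]; field_simp; ring
  have hR : -τ * A + A * S = A * (-τ + S) := by ring
  rw [hL, hR, mul_right_inj' hApos.ne']
  constructor <;> intro h <;> linarith
end

section
/- Let J ⊆ (0,∞) be an open interval and N : J → ℝ twice differentiable with N > 0 on J. Let I ⊆ ℝ be an open interval and b_2 : I → J a differentiable function satisfying b_2'(t) = N(b_2(t)) for all t ∈ I, and define b_1 := N ∘ b_2. Then b_1 and b_2 are twice differentiable on I and, for all t ∈ I: (a) b_1''(t)/b_1(t) = (1/2)·(N²)''(b_2(t)); (b) b_2''(t)/b_2(t) = (1/2)·(N²)'(b_2(t))/b_2(t); (c) (b_1'(t)·b_2'(t))/(b_1(t)·b_2(t)) = b_2''(t)/b_2(t); and consequently (d) 2·( b_1''/b_1 + b_2''/b_2 + (b_1'·b_2')/(b_1·b_2) )(t) = (N²)''(b_2(t)) + 2·(N²)'(b_2(t))/b_2(t). -/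
/-!
Along a solution of the autonomous equation `b₂' = N ∘ b₂`, the chain rule turns every
`t`-derivative of a function of `b₂` into its `r`-derivative times `N(b₂)`. Hence
`b₂'' = N'N = ½(N²)'` and `b₁' = (N ∘ b₂)' = N'N` at `b₂`, while
`b₁'' = (N''N + N'²)N = ½(N²)''·b₁`, and the four identities are algebra.
-/

open Filter Topology

theorem deriv_eventuallyEq_of_forall_hasDerivAt {f f' : ℝ → ℝ} {U : Set ℝ} {x : ℝ}
    (hU : IsOpen U) (hf : ∀ y ∈ U, HasDerivAt f (f' y) y) (hx : x ∈ U) :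
    deriv f =ᶠ[𝓝 x] f' :=
  eventuallyEq_of_mem (hU.mem_nhds hx) fun y hy => (hf y hy).deriv

theorem hasDerivAt_deriv_of_forall_hasDerivAt {f f' : ℝ → ℝ} {f'' : ℝ} {U : Set ℝ} {x : ℝ}
    (hU : IsOpen U) (hf : ∀ y ∈ U, HasDerivAt f (f' y) y) (hx : x ∈ U)
    (hf' : HasDerivAt f' f'' x) : HasDerivAt (deriv f) f'' x :=
  hf'.congr_of_eventuallyEq (deriv_eventuallyEq_of_forall_hasDerivAt hU hf hx)

section SquareLapse

variable {N : ℝ → ℝ} {r : ℝ}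

theorem hasDerivAt_sq_of_differentiableAt (hN : DifferentiableAt ℝ N r) :
    HasDerivAt (fun r => N r ^ 2) (2 * N r * deriv N r) r := by
  simpa [mul_comm, mul_assoc, mul_left_comm] using hN.hasDerivAt.fun_pow 2

theorem hasDerivAt_deriv_sq {J : Set ℝ} (hJ : IsOpen J) (hN : ∀ r ∈ J, DifferentiableAt ℝ N r)
    (hr : r ∈ J) (hN' : DifferentiableAt ℝ (deriv N) r) :
    HasDerivAt (deriv fun r => N r ^ 2)
      (2 * deriv N r * deriv N r + 2 * N r * deriv (deriv N) r) r :=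
  hasDerivAt_deriv_of_forall_hasDerivAt hJ (fun s hs => hasDerivAt_sq_of_differentiableAt (hN s hs))
    hr (((hN r hr).hasDerivAt.const_mul 2).mul hN'.hasDerivAt)

end SquareLapse

namespace AutonomousSolution

variable {N b : ℝ → ℝ} {I : Set ℝ} {t : ℝ}

theorem hasDerivAt_comp (hb : ∀ t ∈ I, HasDerivAt b (N (b t)) t) (ht : t ∈ I) {g : ℝ → ℝ}
    (hg : DifferentiableAt ℝ g (b t)) :
    HasDerivAt (g ∘ b) (deriv g (b t) * N (b t)) t :=
  hg.hasDerivAt.comp t (hb t ht)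

variable (hI : IsOpen I) (hb : ∀ t ∈ I, HasDerivAt b (N (b t)) t)
  (hN : ∀ t ∈ I, DifferentiableAt ℝ N (b t))
include hI hb hN

theorem hasDerivAt_deriv (ht : t ∈ I) :
    HasDerivAt (deriv b) (deriv N (b t) * N (b t)) t :=
  hasDerivAt_deriv_of_forall_hasDerivAt hI hb ht (hasDerivAt_comp hb ht (hN t ht))

theorem hasDerivAt_deriv_comp (ht : t ∈ I) (hN' : DifferentiableAt ℝ (deriv N) (b t)) :
    HasDerivAt (deriv (N ∘ b))
      (deriv (deriv N) (b t) * N (b t) * N (b t) + deriv N (b t) * (deriv N (b t) * N (b t))) t :=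
  hasDerivAt_deriv_of_forall_hasDerivAt (f' := fun s => deriv N (b s) * N (b s)) hI
    (fun s hs => hasDerivAt_comp hb hs (hN s hs))
    ht ((hasDerivAt_comp hb ht hN').mul (hasDerivAt_comp hb ht (hN t ht)))

end AutonomousSolution

open AutonomousSolution in
theorem stmt_15_general (J : Set ℝ) (hJopen : IsOpen J)
    (N : ℝ → ℝ)
    (hN : ∀ r ∈ J, DifferentiableAt ℝ N r)
    (hN' : ∀ r ∈ J, DifferentiableAt ℝ (deriv N) r)
    (hNpos : ∀ r ∈ J, 0 < N r)
    (I : Set ℝ) (hIopen : IsOpen I)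
    (b₂ : ℝ → ℝ) (hmap : ∀ t ∈ I, b₂ t ∈ J)
    (hb₂ : ∀ t ∈ I, HasDerivAt b₂ (N (b₂ t)) t)
    (b₁ : ℝ → ℝ) (hb₁ : b₁ = N ∘ b₂) :
    (∀ t ∈ I, DifferentiableAt ℝ b₁ t) ∧
    (∀ t ∈ I, DifferentiableAt ℝ (deriv b₁) t) ∧
    (∀ t ∈ I, DifferentiableAt ℝ b₂ t) ∧
    (∀ t ∈ I, DifferentiableAt ℝ (deriv b₂) t) ∧
    (∀ t ∈ I,
      deriv (deriv b₁) t / b₁ t = (1 / 2) * deriv (deriv (fun r => N r ^ 2)) (b₂ t)) ∧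
    (∀ t ∈ I,
      deriv (deriv b₂) t / b₂ t = (1 / 2) * deriv (fun r => N r ^ 2) (b₂ t) / b₂ t) ∧
    (∀ t ∈ I,
      (deriv b₁ t * deriv b₂ t) / (b₁ t * b₂ t) = deriv (deriv b₂) t / b₂ t) ∧
    (∀ t ∈ I,
      2 * (deriv (deriv b₁) t / b₁ t + deriv (deriv b₂) t / b₂ t +
          (deriv b₁ t * deriv b₂ t) / (b₁ t * b₂ t)) =
        deriv (deriv (fun r => N r ^ 2)) (b₂ t) +
          2 * deriv (fun r => N r ^ 2) (b₂ t) / b₂ t) := by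
  subst hb₁
  have hNb : ∀ t ∈ I, DifferentiableAt ℝ N (b₂ t) := fun t ht => hN _ (hmap t ht)
  have hb₁' := fun t (ht : t ∈ I) => hasDerivAt_comp hb₂ ht (hNb t ht)
  have hb₁'' := fun t (ht : t ∈ I) => hasDerivAt_deriv_comp hIopen hb₂ hNb ht (hN' _ (hmap t ht))
  have hb₂'' := fun t (ht : t ∈ I) => hasDerivAt_deriv hIopen hb₂ hNb ht
  have hM' := fun t (ht : t ∈ I) => (hasDerivAt_sq_of_differentiableAt (hNb t ht)).deriv
  have hM'' := fun t ht => (hasDerivAt_deriv_sq hJopen hN (hmap t ht) (hN' _ (hmap t ht))).deriv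
  have hNne : ∀ t ∈ I, N (b₂ t) ≠ 0 := fun t ht => (hNpos _ (hmap t ht)).ne'
  refine ⟨fun t ht => (hb₁' t ht).differentiableAt, fun t ht => (hb₁'' t ht).differentiableAt,
    fun t ht => (hb₂ t ht).differentiableAt, fun t ht => (hb₂'' t ht).differentiableAt,
    fun t ht => ?_, fun t ht => ?_, fun t ht => ?_, fun t ht => ?_⟩ <;>
  simp only [Function.comp_apply, (hb₁' t ht).deriv, (hb₁'' t ht).deriv, (hb₂ t ht).deriv,
    (hb₂'' t ht).deriv, hM' t ht, hM'' t ht] <;>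
  field_simp [hNne t ht] <;>
  ring

/-- Equations (6.6) and (6.7) of the paper for BTZ-type space-times: if
`b₂' = N ∘ b₂` and `b₁ = N ∘ b₂`, with `N > 0` twice differentiable on
`J ⊆ (0,∞)`, then `b₁, b₂` are twice differentiable and
(a) `b₁''/b₁ = ½(N²)''(b₂)`, (b) `b₂''/b₂ = ½(N²)'(b₂)/b₂`,
(c) `b₁'b₂'/(b₁b₂) = b₂''/b₂`, and hence
(d) `2(b₁''/b₁ + b₂''/b₂ + b₁'b₂'/(b₁b₂)) = (N²)''(b₂) + 2(N²)'(b₂)/b₂`. -/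
theorem stmt_15 (J : Set ℝ) (hJopen : IsOpen J) (hJconn : J.OrdConnected)
    (hJpos : J ⊆ Set.Ioi (0 : ℝ))
    (N : ℝ → ℝ)
    (hN : ∀ r ∈ J, DifferentiableAt ℝ N r)
    (hN' : ∀ r ∈ J, DifferentiableAt ℝ (deriv N) r)
    (hNpos : ∀ r ∈ J, 0 < N r)
    (I : Set ℝ) (hIopen : IsOpen I) (hIconn : I.OrdConnected)
    (b₂ : ℝ → ℝ) (hmap : ∀ t ∈ I, b₂ t ∈ J)
    (hb₂ : ∀ t ∈ I, HasDerivAt b₂ (N (b₂ t)) t)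
    (b₁ : ℝ → ℝ) (hb₁ : b₁ = N ∘ b₂) :
    (∀ t ∈ I, DifferentiableAt ℝ b₁ t) ∧
    (∀ t ∈ I, DifferentiableAt ℝ (deriv b₁) t) ∧
    (∀ t ∈ I, DifferentiableAt ℝ b₂ t) ∧
    (∀ t ∈ I, DifferentiableAt ℝ (deriv b₂) t) ∧
    (∀ t ∈ I,
      deriv (deriv b₁) t / b₁ t = (1 / 2) * deriv (deriv (fun r => N r ^ 2)) (b₂ t)) ∧
    (∀ t ∈ I,
      deriv (deriv b₂) t / b₂ t = (1 / 2) * deriv (fun r => N r ^ 2) (b₂ t) / b₂ t) ∧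
    (∀ t ∈ I,
      (deriv b₁ t * deriv b₂ t) / (b₁ t * b₂ t) = deriv (deriv b₂) t / b₂ t) ∧
    (∀ t ∈ I,
      2 * (deriv (deriv b₁) t / b₁ t + deriv (deriv b₂) t / b₂ t +
          (deriv b₁ t * deriv b₂ t) / (b₁ t * b₂ t)) =
        deriv (deriv (fun r => N r ^ 2)) (b₂ t) +
          2 * deriv (fun r => N r ^ 2) (b₂ t) / b₂ t) :=
  stmt_15_general J hJopen N hN hN' hNpos I hIopen b₂ hmap hb₂ b₁ hb₁
end

section
/- Let I ⊆ (0,∞) be a nondegenerate open interval, λ ∈ ℝ, and f : I → ℝ twice differentiable. Then the system f''(r) + f'(r)/r = 2λ and f'(r)/r = λ for all r ∈ I holds if and only if there exists a constant c_2 ∈ ℝ such that f(r) = (λ/2)·r² + c_2 for all r ∈ I. -/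
/-! Since `r ≠ 0` on `I`, the second equation says `f' r = λ r`; on the connected open set `I`
this determines `f` up to an additive constant as `(λ/2) r² + c₂`, and then `f'' = λ`, which makes
the first equation automatic. -/

open Filter Topology

theorem hasDerivAt_half_mul_sq (a x : ℝ) : HasDerivAt (fun x => a / 2 * x ^ 2) (a * x) x :=
  ((hasDerivAt_pow 2 x).const_mul (a / 2)).congr_deriv (by norm_num; ring)

theorem deriv_half_mul_sq_add (a c : ℝ) :
    deriv (fun x : ℝ => a / 2 * x ^ 2 + c) = fun x => a * x :=
  funext fun x => ((hasDerivAt_half_mul_sq a x).add_const c).deriv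

theorem IsOpen.exists_eq_half_mul_sq_add_of_deriv_eq {s : Set ℝ} (hs : IsOpen s)
    (hs' : IsPreconnected s) {f : ℝ → ℝ} {a : ℝ} (hf : DifferentiableOn ℝ f s)
    (hf' : ∀ x ∈ s, deriv f x = a * x) : ∃ c, ∀ x ∈ s, f x = a / 2 * x ^ 2 + c := by
  have hq : DifferentiableOn ℝ (fun x : ℝ => a / 2 * x ^ 2) s := fun x _ =>
    (hasDerivAt_half_mul_sq a x).differentiableAt.differentiableWithinAt
  obtain ⟨c, hc⟩ := hs.exists_eq_add_of_deriv_eq hs' hf hq fun x hx => by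
    rw [hf' x hx, (hasDerivAt_half_mul_sq a x).deriv]
  exact ⟨c, fun x hx => hc hx⟩

theorem Filter.EventuallyEq.deriv_eventuallyEq_mul_of_half_mul_sq_add {f : ℝ → ℝ} {a c r : ℝ}
    (h : f =ᶠ[𝓝 r] fun x => a / 2 * x ^ 2 + c) : deriv f =ᶠ[𝓝 r] fun x => a * x := by
  rw [← deriv_half_mul_sq_add a c]
  exact h.deriv

theorem stmt_16_general (I : Set ℝ) (hIopen : IsOpen I) (hIconn : I.OrdConnected)
    (hIsub : I ⊆ Set.Ioi (0 : ℝ))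
    (lam : ℝ) (f : ℝ → ℝ)
    (hf : ∀ r ∈ I, DifferentiableAt ℝ f r) :
    (∀ r ∈ I, deriv (deriv f) r + deriv f r / r = 2 * lam ∧ deriv f r / r = lam) ↔
    (∃ c₂ : ℝ, ∀ r ∈ I, f r = lam / 2 * r ^ 2 + c₂) := by
  constructor
  · intro h
    exact hIopen.exists_eq_half_mul_sq_add_of_deriv_eq hIconn.isPreconnected
      (fun r hr => (hf r hr).differentiableWithinAt)
      fun r hr => (div_eq_iff (hIsub hr).ne').1 (h r hr).2
  · rintro ⟨c₂, hc⟩ r hr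
    have hr0 : r ≠ 0 := (hIsub hr).ne'
    have hfq : f =ᶠ[𝓝 r] fun x => lam / 2 * x ^ 2 + c₂ :=
      eventually_of_mem (hIopen.mem_nhds hr) hc
    have hd := hfq.deriv_eventuallyEq_mul_of_half_mul_sq_add
    have hd1 : deriv f r = lam * r := hd.eq_of_nhds
    have hd2 : deriv (deriv f) r = lam := by
      rw [hd.deriv_eq]
      simp
    rw [hd1, hd2, mul_div_cancel_right₀ lam hr0]
    exact ⟨by ring, rfl⟩

/-- Analytic core of Proposition 6.1 of the paper: on a nondegenerate open
interval `I ⊆ (0,∞)`, a twice differentiable `f` satisfies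
`f'' + f'/r = 2λ` and `f'/r = λ` on `I` iff `f(r) = (λ/2)r² + c₂` on `I`
for some constant `c₂`. -/
theorem stmt_16 (I : Set ℝ) (hIopen : IsOpen I) (hIconn : I.OrdConnected)
    (hIsub : I ⊆ Set.Ioi (0 : ℝ)) (hInt : I.Nontrivial)
    (lam : ℝ) (f : ℝ → ℝ)
    (hf : ∀ r ∈ I, DifferentiableAt ℝ f r)
    (hf' : ∀ r ∈ I, DifferentiableAt ℝ (deriv f) r) :
    (∀ r ∈ I, deriv (deriv f) r + deriv f r / r = 2 * lam ∧ deriv f r / r = lam) ↔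
    (∃ c₂ : ℝ, ∀ r ∈ I, f r = lam / 2 * r ^ 2 + c₂) :=
  stmt_16_general I hIopen hIconn hIsub lam f hf
end

section
/- Let I ⊆ (0,∞) be a nondegenerate open interval, λ ∈ ℝ, and f : I → ℝ twice differentiable. Then f''(r) + 2·f'(r)/r = λ for all r ∈ I if and only if there exist constants c_1, c_2 ∈ ℝ such that f(r) = −c_1/r + (λ/6)·r² + c_2 for all r ∈ I. -/
/-! For `r ≠ 0`, `f'' + 2f'/r = r⁻² (r² f')'`, so the equation integrates once to
`r² f' = λ r³/3 + c₁` and a second time to `f = -c₁/r + λ r²/6 + c₂`. -/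

open Set

/-- The Laplacian of a radial function `x ↦ f ‖x‖` on `ℝ³`, written in the radius `r`. -/
noncomputable def radialLaplacian (f : ℝ → ℝ) (r : ℝ) : ℝ :=
  deriv (deriv f) r + 2 * deriv f r / r

lemma hasDerivAt_sq_mul_deriv {f : ℝ → ℝ} {r : ℝ} (hf : DifferentiableAt ℝ (deriv f) r)
    (hr : r ≠ 0) :
    HasDerivAt (fun s => s ^ 2 * deriv f s) (r ^ 2 * radialLaplacian f r) r := by
  refine ((hasDerivAt_pow 2 r).mul hf.hasDerivAt).congr_deriv ?_
  rw [radialLaplacian]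
  field_simp
  ring

lemma hasDerivAt_neg_div_add_mul_sq (c₁ lam : ℝ) {r : ℝ} (hr : r ≠ 0) :
    HasDerivAt (fun s => -c₁ / s + lam / 6 * s ^ 2) (c₁ / r ^ 2 + lam / 3 * r) r := by
  refine (((hasDerivAt_const r (-c₁)).div (hasDerivAt_id' r) hr).add
    ((hasDerivAt_pow 2 r).const_mul (lam / 6))).congr_deriv ?_
  field_simp
  ring

lemma hasDerivAt_div_sq_add_mul (c₁ lam : ℝ) {r : ℝ} (hr : r ≠ 0) :
    HasDerivAt (fun s => c₁ / s ^ 2 + lam / 3 * s) (-2 * c₁ / r ^ 3 + lam / 3) r := by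
  refine (((hasDerivAt_const r c₁).div (hasDerivAt_pow 2 r) (pow_ne_zero 2 hr)).add
    ((hasDerivAt_id r).const_mul (lam / 3))).congr_deriv ?_
  field_simp
  ring

section

variable {I : Set ℝ} (hIopen : IsOpen I) (hI0 : ∀ r ∈ I, r ≠ 0) {lam : ℝ} {f : ℝ → ℝ}
include hIopen hI0

theorem exists_eqOn_of_radialLaplacian_eq (hIconn : IsPreconnected I)
    (hf : ∀ r ∈ I, DifferentiableAt ℝ f r) (hf' : ∀ r ∈ I, DifferentiableAt ℝ (deriv f) r)
    (H : ∀ r ∈ I, radialLaplacian f r = lam) :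
    ∃ c₁ c₂ : ℝ, ∀ r ∈ I, f r = -c₁ / r + lam / 6 * r ^ 2 + c₂ := by
  obtain ⟨c₁, hc₁⟩ := hIopen.exists_eq_add_of_deriv_eq hIconn
    (g := fun s => lam / 3 * s ^ 3)
    (fun r hr => (hasDerivAt_sq_mul_deriv (hf' r hr) (hI0 r hr)).differentiableAt
      |>.differentiableWithinAt)
    (by fun_prop)
    (fun r hr => by
      rw [(hasDerivAt_sq_mul_deriv (hf' r hr) (hI0 r hr)).deriv, H r hr]
      simp only [deriv_const_mul_field', deriv_pow_field]
      ring)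
  have hderiv : EqOn (deriv f) (fun s => c₁ / s ^ 2 + lam / 3 * s) I := fun r hr => by
    have h := hc₁ hr
    simp only at h
    field_simp [hI0 r hr]
    linear_combination 3 * h
  obtain ⟨c₂, hc₂⟩ := hIopen.exists_eq_add_of_deriv_eq hIconn
    (g := fun s => -c₁ / s + lam / 6 * s ^ 2)
    (fun r hr => (hf r hr).differentiableWithinAt)
    (fun r hr => (hasDerivAt_neg_div_add_mul_sq c₁ lam (hI0 r hr)).differentiableAt
      |>.differentiableWithinAt)
    (fun r hr => by rw [hderiv hr, (hasDerivAt_neg_div_add_mul_sq c₁ lam (hI0 r hr)).deriv])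
  exact ⟨c₁, c₂, hc₂⟩

theorem radialLaplacian_eq_of_eqOn {c₁ c₂ : ℝ}
    (hfG : ∀ r ∈ I, f r = -c₁ / r + lam / 6 * r ^ 2 + c₂) {r : ℝ} (hr : r ∈ I) :
    radialLaplacian f r = lam := by
  have hderiv : EqOn (deriv f) (fun s => c₁ / s ^ 2 + lam / 3 * s) I := fun s hs => by
    rw [EqOn.deriv hfG hIopen hs,
      ((hasDerivAt_neg_div_add_mul_sq c₁ lam (hI0 s hs)).add_const c₂).deriv]
  rw [radialLaplacian, hderiv.deriv hIopen hr,
    (hasDerivAt_div_sq_add_mul c₁ lam (hI0 r hr)).deriv, hderiv hr]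
  field_simp [hI0 r hr]
  ring

end

theorem stmt_17_general (I : Set ℝ) (hIopen : IsOpen I) (hIconn : I.OrdConnected)
    (hIsub : I ⊆ Set.Ioi (0 : ℝ))
    (lam : ℝ) (f : ℝ → ℝ)
    (hf : ∀ r ∈ I, DifferentiableAt ℝ f r)
    (hf' : ∀ r ∈ I, DifferentiableAt ℝ (deriv f) r) :
    (∀ r ∈ I, deriv (deriv f) r + 2 * deriv f r / r = lam) ↔
    (∃ c₁ c₂ : ℝ, ∀ r ∈ I, f r = -c₁ / r + lam / 6 * r ^ 2 + c₂) := by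
  have hI0 : ∀ r ∈ I, r ≠ 0 := fun r hr => (hIsub hr).ne'
  exact ⟨exists_eqOn_of_radialLaplacian_eq hIopen hI0 hIconn.isPreconnected hf hf',
    fun ⟨_, _, hfG⟩ _ hr => radialLaplacian_eq_of_eqOn hIopen hI0 hfG hr⟩

/-- Analytic core of Proposition 6.3 of the paper: on a nondegenerate open
interval `I ⊆ (0,∞)`, a twice differentiable `f` satisfies
`f'' + 2f'/r = λ` on `I` iff `f(r) = -c₁/r + (λ/6)r² + c₂` on `I` for some
constants `c₁, c₂`. -/
theorem stmt_17 (I : Set ℝ) (hIopen : IsOpen I) (hIconn : I.OrdConnected)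
    (hIsub : I ⊆ Set.Ioi (0 : ℝ)) (hInt : I.Nontrivial)
    (lam : ℝ) (f : ℝ → ℝ)
    (hf : ∀ r ∈ I, DifferentiableAt ℝ f r)
    (hf' : ∀ r ∈ I, DifferentiableAt ℝ (deriv f) r) :
    (∀ r ∈ I, deriv (deriv f) r + 2 * deriv f r / r = lam) ↔
    (∃ c₁ c₂ : ℝ, ∀ r ∈ I, f r = -c₁ / r + lam / 6 * r ^ 2 + c₂) :=
  stmt_17_general I hIopen hIconn hIsub lam f hf hf'
end

section
/- Let I ⊆ ℝ be an open interval and φ : I → ℝ twice differentiable with φ > 0 on I. Let s_1,…,s_m be positive integers and p_1,…,p_m real numbers, and set ζ := Σ_{l=1}^m s_l·p_l. Then for any fixed index i, the following identity holds on I: (1/s_i)·(φ^{p_i·s_i})''/φ^{p_i·s_i} + ((φ^{p_i})'/φ^{p_i})·Σ_{k≠i} s_k·(φ^{p_k})'/φ^{p_k} = p_i·[(ζ − 1)·(φ'/φ)² + φ''/φ]. -/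
/-- The computation in the proof of Proposition 4.2 of the paper: for the
generalized Kasner warping functions `bₖ = φ^{pₖ}` with `ζ = Σ sₗ pₗ`, for any
fixed index `i`,
`(1/sᵢ)(φ^{pᵢsᵢ})''/φ^{pᵢsᵢ} + ((φ^{pᵢ})'/φ^{pᵢ}) Σ_{k≠i} sₖ (φ^{pₖ})'/φ^{pₖ}
  = pᵢ[(ζ-1)(φ'/φ)² + φ''/φ]` on `I`. -/
theorem stmt_19 (I : Set ℝ) (hIopen : IsOpen I) (hIconn : I.OrdConnected)
    (φ : ℝ → ℝ)
    (hφ : ∀ x ∈ I, DifferentiableAt ℝ φ x)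
    (hφ' : ∀ x ∈ I, DifferentiableAt ℝ (deriv φ) x)
    (hφpos : ∀ x ∈ I, 0 < φ x)
    (m : ℕ) (hm : 0 < m) (s : Fin m → ℕ) (hs : ∀ l, 0 < s l) (p : Fin m → ℝ)
    (ζ : ℝ) (hζdef : ζ = ∑ l, (s l : ℝ) * p l) (i : Fin m) :
    ∀ x ∈ I,
      (1 / (s i : ℝ)) *
          (deriv (deriv (fun y => φ y ^ (p i * (s i : ℝ)))) x /
            φ x ^ (p i * (s i : ℝ))) +
        (deriv (fun y => φ y ^ p i) x / φ x ^ p i) *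
          ∑ k ∈ Finset.univ.erase i,
            (s k : ℝ) * (deriv (fun y => φ y ^ p k) x / φ x ^ p k) =
      p i * ((ζ - 1) * (deriv φ x / φ x) ^ 2 + deriv (deriv φ) x / φ x) := by
  intro x hx
  have hxI : I ∈ nhds x := hIopen.mem_nhds hx
  have hpos := hφpos x hx
  have hne : φ x ≠ 0 := hpos.ne'
  have hd1 : ∀ c : ℝ, ∀ y ∈ I,
      HasDerivAt (fun z => φ z ^ c) (deriv φ y * c * φ y ^ (c - 1)) y :=
    fun c y hy => (hφ y hy).hasDerivAt.rpow_const (Or.inl (hφpos y hy).ne')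
  have hderiv1 : ∀ c : ℝ, ∀ y ∈ I,
      deriv (fun z => φ z ^ c) y = deriv φ y * c * φ y ^ (c - 1) :=
    fun c y hy => (hd1 c y hy).deriv
  set c := p i * (s i : ℝ) with hc
  have hEq : (deriv (fun z => φ z ^ c)) =ᶠ[nhds x] fun y => deriv φ y * c * φ y ^ (c - 1) :=
    Filter.eventuallyEq_of_mem hxI (fun y hy => hderiv1 c y hy)
  have hd2 : HasDerivAt (fun y => deriv φ y * c * φ y ^ (c - 1))
      (deriv (deriv φ) x * c * φ x ^ (c - 1)
        + deriv φ x * c * (deriv φ x * (c - 1) * φ x ^ (c - 1 - 1))) x :=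
    ((hφ' x hx).hasDerivAt.mul_const c).mul
      ((hφ x hx).hasDerivAt.rpow_const (Or.inl hne))
  have h2 : deriv (deriv (fun z => φ z ^ c)) x
      = deriv (deriv φ) x * c * φ x ^ (c - 1)
        + deriv φ x * c * (deriv φ x * (c - 1) * φ x ^ (c - 1 - 1)) := by
    rw [hEq.deriv_eq]; exact hd2.deriv
  -- rpow simplifications
  have hrp : ∀ d : ℝ, φ x ^ (d - 1) = φ x ^ d / φ x := fun d => by
    rw [Real.rpow_sub hpos, Real.rpow_one]
  have hPne : ∀ d : ℝ, φ x ^ d ≠ 0 := fun d => (Real.rpow_pos_of_pos hpos d).ne'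
  -- sum simplification
  have hsum : ∀ k ∈ Finset.univ.erase i,
      (s k : ℝ) * (deriv (fun y => φ y ^ p k) x / φ x ^ p k)
        = (s k : ℝ) * p k * (deriv φ x / φ x) := by
    intro k _
    rw [hderiv1 (p k) x hx, hrp]
    field_simp [hPne (p k)]
  rw [Finset.sum_congr rfl hsum, h2, hderiv1 (p i) x hx, hrp, hrp, hrp,
    ← Finset.sum_mul, hζdef, ← Finset.add_sum_erase _ (fun l => (s l : ℝ) * p l) (Finset.mem_univ i)]
  have hsne : (s i : ℝ) ≠ 0 := Nat.cast_ne_zero.mpr (hs i).ne'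
  have hPc := hPne c
  have hPi := hPne (p i)
  set P := φ x ^ c with hP
  set Q := φ x ^ p i with hQ
  field_simp
  rw [hrp, ← hQ]
  field_simp
  ring
end
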